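/- arXiv:2403.18669 — 4 statements merged into one kernel-verified Lean document; each statement's English description precedes it below -/
import Mathlib

section
/- For every n ≥ 1 and all x > 0, the function B_n(x) := (1/h_{n−1}) ∫₀^∞ [(v'(x) − v'(y))/(x − y)] P_n(y;t) P_{n−1}(y;t) w(y;t) dy admits the explicit expression B_n(x) = 3β_n + r_n/x + r_n*/x², where r_n := 3(α_n + α_{n−1})β_n − n and r_n* := (t/h_{n−1}) ∫₀^∞ y⁻¹ P_n(y;t) P_{n−1}(y;t) w(y;t) dy. -/
/-!
The divided difference of `v'` is `3x + 3y + λ/(xy) + t/(xy²) + t/(x²y)`, so `B_n(x)` is a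
combination of the moments `∫ yᵏ P_n P_{n-1} w` for `k = 0, 1, -1, -2`. Orthogonality and the
recurrence give the first two, `0` and `β_n h_{n-1}`. The `k = -2` moment is traded for the
`k = -1` one by integrating `(P_n P_{n-1} w)'` over `(0, ∞)`: since `w'/w = λ/y - 3y² + t/y²`,
`λ ∫ y⁻¹ P_n P_{n-1} w + t ∫ y⁻² P_n P_{n-1} w = 3 ∫ y² P_n P_{n-1} w - n h_{n-1}
  = (3 (α_n + α_{n-1}) β_n - n) h_{n-1}`.
-/

open MeasureTheory Polynomial Real Filter Set Topology

section MomentFunctional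

variable {R : Type*} [CommRing R] (L : R[X] →ₗ[R] R)

theorem linearMap_C_mul (c : R) (Q : R[X]) : L (C c * Q) = c * L Q := by
  rw [← smul_eq_C_mul, map_smul, smul_eq_mul]

variable {L} {P : ℕ → R[X]} {h α β : ℕ → R}

theorem map_X_mul_succ_mul (horth : ∀ m n, L (P m * P n) = if m = n then h n else 0)
    (hrec : ∀ n, X * P (n + 1) = P (n + 2) + C (α (n + 1)) * P (n + 1) + C (β (n + 1)) * P n)
    (m : ℕ) : L (X * (P (m + 1) * P m)) = β (m + 1) * h m := by
  rw [← mul_assoc, hrec]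
  simp [add_mul, mul_assoc, linearMap_C_mul, horth]

theorem map_X_mul_self (horth : ∀ m n, L (P m * P n) = if m = n then h n else 0)
    (hrec : ∀ n, X * P (n + 1) = P (n + 2) + C (α (n + 1)) * P (n + 1) + C (β (n + 1)) * P n)
    (hrec0 : X * P 0 = P 1 + C (α 0) * P 0) (m : ℕ) : L (X * (P m * P m)) = α m * h m := by
  rw [← mul_assoc]
  cases m with
  | zero => simp [hrec0, add_mul, mul_assoc, linearMap_C_mul, horth]
  | succ m => simp [hrec, add_mul, mul_assoc, linearMap_C_mul, horth]

variable [Nontrivial R]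

theorem map_mul_eq_zero_of_degree_lt (hP : ∀ n, (P n).Monic ∧ (P n).natDegree = n)
    (horth : ∀ m n, L (P m * P n) = if m = n then h n else 0) {m : ℕ} {Q : R[X]}
    (hQ : Q.degree < m) : L (Q * P m) = 0 := by
  let S : Polynomial.Sequence R :=
    ⟨P, fun n => by rw [degree_eq_natDegree (hP n).1.ne_zero, (hP n).2]⟩
  have hspan := S.span_degreeLT (m := m) fun i _ => by simp [S, (hP i).1.leadingCoeff]
  have hker : degreeLT R m ≤ LinearMap.ker (L ∘ₗ LinearMap.mulRight R (P m)) := by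
    rw [← hspan, Submodule.span_le]
    rintro _ ⟨k, hk, rfl⟩
    simp [S, horth, (mem_Iio.mp hk).ne]
  exact hker (mem_degreeLT.mpr hQ)

theorem map_derivative_succ_mul (hP : ∀ n, (P n).Monic ∧ (P n).natDegree = n)
    (horth : ∀ m n, L (P m * P n) = if m = n then h n else 0) (m : ℕ) :
    L (derivative (P (m + 1)) * P m) = (m + 1) * h m := by
  have hcoeff : ∀ n, (P n).coeff n = 1 := fun n => by
    simpa [Monic, leadingCoeff, (hP n).2] using (hP n).1
  have hlow : (derivative (P (m + 1)) - C ((m : R) + 1) * P m).degree < m := by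
    rw [degree_lt_iff_coeff_zero]
    intro j hj
    rw [coeff_sub, coeff_derivative, coeff_C_mul]
    rcases hj.eq_or_lt with rfl | hj
    · simp [hcoeff]
    · rw [coeff_eq_zero_of_natDegree_lt (by rw [(hP _).2]; omega),
        coeff_eq_zero_of_natDegree_lt (by rw [(hP _).2]; omega)]
      ring
  have := map_mul_eq_zero_of_degree_lt hP horth hlow
  rwa [sub_mul, map_sub, mul_assoc, linearMap_C_mul, horth, if_pos rfl, sub_eq_zero] at this

theorem map_derivative_of_succ_mul (hP : ∀ n, (P n).Monic ∧ (P n).natDegree = n)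
    (horth : ∀ m n, L (P m * P n) = if m = n then h n else 0) (m : ℕ) :
    L (derivative (P (m + 1) * P m)) = (m + 1) * h m := by
  have hlow : (derivative (P m)).degree < ↑(m + 1) := by
    calc (derivative (P m)).degree < (P m).degree := degree_derivative_lt (hP m).1.ne_zero
      _ = ↑(m + 1 - 1) := by rw [degree_eq_natDegree (hP m).1.ne_zero, (hP m).2]; rfl
      _ < ↑(m + 1) := by exact_mod_cast (by omega)
  rw [derivative_mul, map_add, map_derivative_succ_mul hP horth, mul_comm (P (m + 1)),
    map_mul_eq_zero_of_degree_lt hP horth hlow, add_zero]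

theorem map_X_sq_mul_succ_mul (hP : ∀ n, (P n).Monic ∧ (P n).natDegree = n)
    (horth : ∀ m n, L (P m * P n) = if m = n then h n else 0)
    (hrec : ∀ n, X * P (n + 1) = P (n + 2) + C (α (n + 1)) * P (n + 1) + C (β (n + 1)) * P n)
    (hrec0 : X * P 0 = P 1 + C (α 0) * P 0) (m : ℕ) :
    L (X ^ 2 * (P (m + 1) * P m)) = (α (m + 1) + α m) * β (m + 1) * h m := by
  have hlow : (P m * X).degree < ↑(m + 2) := by
    rw [degree_mul_X, degree_eq_natDegree (hP m).1.ne_zero, (hP m).2]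
    exact_mod_cast (by omega)
  have hsplit : X ^ 2 * (P (m + 1) * P m) = (P m * X) * P (m + 2)
      + C (α (m + 1)) * (X * (P (m + 1) * P m)) + C (β (m + 1)) * (X * (P m * P m)) := by
    linear_combination (P m * X) * hrec m
  rw [hsplit, map_add, map_add, linearMap_C_mul, linearMap_C_mul,
    map_mul_eq_zero_of_degree_lt hP horth hlow, map_X_mul_succ_mul horth hrec,
    map_X_mul_self horth hrec hrec0]
  ring

end MomentFunctional

noncomputable def momentFunctional (μ : Measure ℝ) (w : ℝ → ℝ)
    (hint : ∀ Q : ℝ[X], Integrable (fun y => Q.eval y * w y) μ) : ℝ[X] →ₗ[ℝ] ℝ where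
  toFun Q := ∫ y, Q.eval y * w y ∂μ
  map_add' Q R := by simp only [eval_add, add_mul]; exact integral_add (hint Q) (hint R)
  map_smul' c Q := by
    simp only [eval_smul, smul_eq_mul, mul_assoc, RingHom.id_apply]
    exact integral_const_mul c _

theorem momentFunctional_apply (μ : Measure ℝ) (w : ℝ → ℝ)
    (hint : ∀ Q : ℝ[X], Integrable (fun y => Q.eval y * w y) μ) (Q : ℝ[X]) :
    momentFunctional μ w hint Q = ∫ y, Q.eval y * w y ∂μ := rfl

theorem exp_neg_div_le {t y : ℝ} (ht : 0 < t) (hy : 0 < y) (k : ℕ) :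
    exp (-(t / y)) ≤ k.factorial / t ^ k * y ^ k := by
  have h := pow_div_factorial_le_exp (t / y) (div_pos ht hy).le k
  rw [exp_neg, inv_le_comm₀ (exp_pos _) (by positivity)]
  refine (le_of_eq ?_).trans h
  rw [div_pow]
  field_simp

theorem integrableOn_rpow_mul_exp_neg_pow_three_sub_div (s : ℝ) {t : ℝ} (ht : 0 < t) :
    IntegrableOn (fun y => y ^ s * exp (-y ^ 3 - t / y)) (Ioi 0) := by
  obtain ⟨k, hk⟩ := exists_nat_gt (-1 - s)
  have hdom : IntegrableOn
      (fun y : ℝ => k.factorial / t ^ k * (y ^ (s + k) * exp (-y ^ (3 : ℝ)))) (Ioi 0) :=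
    (integrableOn_rpow_mul_exp_neg_rpow (by linarith) (by norm_num)).const_mul _
  refine hdom.mono' ?_ ((ae_restrict_iff' measurableSet_Ioi).mpr (ae_of_all _ fun y hy => ?_))
  · refine ContinuousOn.aestronglyMeasurable (fun y hy => ?_) measurableSet_Ioi
    have hy : y ≠ 0 := (mem_Ioi.mp hy).ne'
    exact ContinuousAt.continuousWithinAt (by fun_prop (disch := simp [hy]))
  · have hy : 0 < y := hy
    rw [norm_mul, norm_of_nonneg (rpow_pos_of_pos hy s).le, norm_of_nonneg (exp_pos _).le,
      rpow_add hy, rpow_natCast, rpow_ofNat, sub_eq_add_neg, exp_add]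
    calc y ^ s * (exp (-y ^ 3) * exp (-(t / y)))
        ≤ y ^ s * (exp (-y ^ 3) * (k.factorial / t ^ k * y ^ k)) := by
          gcongr
          exact exp_neg_div_le ht hy k
      _ = _ := by ring

section AiryWeight

variable {lam t : ℝ} {w : ℝ → ℝ}

theorem integrableOn_zpow_mul_eval_mul (ht : 0 < t)
    (hw : ∀ x : ℝ, 0 < x → w x = x ^ lam * exp (-x ^ 3 - t / x)) (k : ℤ) (Q : ℝ[X]) :
    IntegrableOn (fun y => y ^ k * (Q.eval y * w y)) (Ioi 0) := by
  induction Q using Polynomial.induction_on' with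
  | add p q hp hq =>
    refine (hp.add hq).congr_fun (fun y _ => ?_) measurableSet_Ioi
    simp only [eval_add, Pi.add_apply]
    ring
  | monomial i c =>
    refine IntegrableOn.congr_fun
      ((integrableOn_rpow_mul_exp_neg_pow_three_sub_div (k + i + lam) ht).const_mul c)
      (fun y (hy : 0 < y) => ?_) measurableSet_Ioi
    rw [eval_monomial, hw y hy, rpow_add hy, rpow_add hy, rpow_intCast, rpow_natCast]
    ring

theorem hasDerivAt_airyWeight (hw : ∀ x : ℝ, 0 < x → w x = x ^ lam * exp (-x ^ 3 - t / x))
    {y : ℝ} (hy : 0 < y) :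
    HasDerivAt w ((lam * y⁻¹ - 3 * y ^ 2 + t * (y ^ 2)⁻¹) * w y) y := by
  have hloc : (fun z => z ^ lam * exp (-z ^ 3 - t / z)) =ᶠ[𝓝 y] w :=
    eventually_of_mem (Ioi_mem_nhds hy) fun z hz => (hw z hz).symm
  refine HasDerivAt.congr_of_eventuallyEq ?_ hloc.symm
  have hd := (hasDerivAt_rpow_const (p := lam) (Or.inl hy.ne')).fun_mul
    (((hasDerivAt_pow 3 y).fun_neg.fun_sub ((hasDerivAt_inv hy.ne').const_mul t)).exp)
  simp only [← div_eq_mul_inv] at hd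
  refine hd.congr_deriv ?_
  rw [hw y hy, rpow_sub_one hy.ne']
  field_simp
  ring

theorem tendsto_eval_mul_airyWeight_nhdsGT_zero (ht : 0 < t)
    (hw : ∀ x : ℝ, 0 < x → w x = x ^ lam * exp (-x ^ 3 - t / x)) (Q : ℝ[X]) :
    Tendsto (fun y => Q.eval y * w y) (𝓝[>] 0) (𝓝 0) := by
  have hsing : Tendsto (fun y : ℝ => y⁻¹ ^ (-lam) * exp (-t * y⁻¹)) (𝓝[>] 0) (𝓝 0) :=
    (tendsto_rpow_mul_exp_neg_mul_atTop_nhds_zero (-lam) t ht).comp tendsto_inv_nhdsGT_zero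
  have hreg : Tendsto (fun y : ℝ => Q.eval y * exp (-y ^ 3)) (𝓝[>] 0)
      (𝓝 (Q.eval 0 * exp (-0 ^ 3))) :=
    (Continuous.tendsto (by fun_prop) 0).mono_left nhdsWithin_le_nhds
  have hlim : Tendsto (fun y => Q.eval y * exp (-y ^ 3) * (y⁻¹ ^ (-lam) * exp (-t * y⁻¹)))
      (𝓝[>] 0) (𝓝 0) := by
    simpa using hreg.mul hsing
  refine hlim.congr' ?_
  filter_upwards [self_mem_nhdsWithin] with y (hy : 0 < y)
  rw [hw y hy, inv_rpow hy.le, rpow_neg hy.le, inv_inv, sub_eq_add_neg, exp_add]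
  ring_nf

/-- Integration by parts of `(Q w)'` over `(0, ∞)`. The boundary term vanishes at `0⁺` thanks to
the factor `exp (-t / y)`, and at `∞` because both `Q w` and its derivative are integrable. -/
theorem integral_derivative_eval_mul_airyWeight (ht : 0 < t)
    (hw : ∀ x : ℝ, 0 < x → w x = x ^ lam * exp (-x ^ 3 - t / x)) (Q : ℝ[X]) :
    (∫ y in Ioi 0, (derivative Q).eval y * w y)
      + lam * (∫ y in Ioi 0, y⁻¹ * (Q.eval y * w y))
      + t * (∫ y in Ioi 0, (y ^ 2)⁻¹ * (Q.eval y * w y))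
      = 3 * ∫ y in Ioi 0, y ^ 2 * (Q.eval y * w y) := by
  have hint := integrableOn_zpow_mul_eval_mul ht hw
  have i0 : IntegrableOn (fun y => (derivative Q).eval y * w y) (Ioi 0) := by
    simpa using hint 0 (derivative Q)
  have i1 : IntegrableOn (fun y => y⁻¹ * (Q.eval y * w y)) (Ioi 0) := by simpa using hint (-1) Q
  have i2 : IntegrableOn (fun y => y ^ 2 * (Q.eval y * w y)) (Ioi 0) := by simpa using hint 2 Q
  have i3 : IntegrableOn (fun y => (y ^ 2)⁻¹ * (Q.eval y * w y)) (Ioi 0) := by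
    simpa using hint (-2) Q
  have hsplit : (fun y => (derivative Q).eval y * w y
        + Q.eval y * ((lam * y⁻¹ - 3 * y ^ 2 + t * (y ^ 2)⁻¹) * w y))
      = fun y => (derivative Q).eval y * w y + lam * (y⁻¹ * (Q.eval y * w y))
        - 3 * (y ^ 2 * (Q.eval y * w y)) + t * ((y ^ 2)⁻¹ * (Q.eval y * w y)) := by
    ext y; ring
  have hderiv : IntegrableOn (fun y => (derivative Q).eval y * w y
      + Q.eval y * ((lam * y⁻¹ - 3 * y ^ 2 + t * (y ^ 2)⁻¹) * w y)) (Ioi 0) := by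
    rw [hsplit]
    exact ((i0.add (i1.const_mul lam)).sub (i2.const_mul 3)).add (i3.const_mul t)
  have hibp := integral_Ioi_deriv_mul_eq_sub (fun y _ => Q.hasDerivAt y)
    (fun y hy => hasDerivAt_airyWeight hw hy) hderiv
    (tendsto_eval_mul_airyWeight_nhdsGT_zero ht hw Q)
    (tendsto_zero_of_hasDerivAt_of_integrableOn_Ioi
      (fun y hy => (Q.hasDerivAt y).mul (hasDerivAt_airyWeight hw hy)) hderiv
      (by simpa [Pi.mul_def] using hint 0 Q))
  rw [hsplit, sub_zero, integral_add _ (i3.const_mul t), integral_sub _ (i2.const_mul 3),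
    integral_add i0 (i1.const_mul lam), integral_const_mul, integral_const_mul,
    integral_const_mul] at hibp
  · linarith
  · exact i0.add (i1.const_mul lam)
  · exact (i0.add (i1.const_mul lam)).sub (i2.const_mul 3)

end AiryWeight

theorem airyKernel_eq {lam t x y : ℝ} (hx : x ≠ 0) (hy : y ≠ 0) (hxy : x ≠ y) :
    ((3 * x ^ 2 - lam / x - t / x ^ 2) - (3 * y ^ 2 - lam / y - t / y ^ 2)) / (x - y)
      = 3 * x + 3 * y + (lam / x + t / x ^ 2) * y⁻¹ + t / x * (y ^ 2)⁻¹ := by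
  rw [div_eq_iff (sub_ne_zero.mpr hxy)]
  field_simp
  ring

theorem integral_airyKernel_mul {f : ℝ → ℝ}
    (hf : ∀ k : ℤ, IntegrableOn (fun y => y ^ k * f y) (Ioi 0)) (lam t : ℝ) {x : ℝ}
    (hx : x ≠ 0) :
    ∫ y in Ioi 0, ((3 * x ^ 2 - lam / x - t / x ^ 2) - (3 * y ^ 2 - lam / y - t / y ^ 2))
        / (x - y) * f y
      = 3 * x * (∫ y in Ioi 0, f y) + 3 * (∫ y in Ioi 0, y * f y)
        + (lam / x + t / x ^ 2) * (∫ y in Ioi 0, y⁻¹ * f y)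
        + t / x * ∫ y in Ioi 0, (y ^ 2)⁻¹ * f y := by
  have i0 : IntegrableOn f (Ioi 0) := by simpa using hf 0
  have i1 : IntegrableOn (fun y => y * f y) (Ioi 0) := by simpa using hf 1
  have i2 : IntegrableOn (fun y => y⁻¹ * f y) (Ioi 0) := by simpa using hf (-1)
  have i3 : IntegrableOn (fun y => (y ^ 2)⁻¹ * f y) (Ioi 0) := by simpa using hf (-2)
  have hae : ∀ᵐ y ∂volume.restrict (Ioi 0),
      ((3 * x ^ 2 - lam / x - t / x ^ 2) - (3 * y ^ 2 - lam / y - t / y ^ 2)) / (x - y) * f y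
        = 3 * x * f y + 3 * (y * f y) + (lam / x + t / x ^ 2) * (y⁻¹ * f y)
          + t / x * ((y ^ 2)⁻¹ * f y) := by
    filter_upwards [ae_restrict_mem measurableSet_Ioi,
      Measure.ae_ne _ x] with y (hy : 0 < y) hyx
    rw [airyKernel_eq hx hy.ne' (Ne.symm hyx)]
    ring
  rw [integral_congr_ae hae, integral_add _ (i3.const_mul _), integral_add _ (i2.const_mul _),
    integral_add (i0.const_mul _) (i1.const_mul _), integral_const_mul, integral_const_mul,
    integral_const_mul, integral_const_mul]
  · exact (i0.const_mul _).add (i1.const_mul _)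
  · exact ((i0.const_mul _).add (i1.const_mul _)).add (i2.const_mul _)

theorem stmt_1_general
    (lam t : ℝ) (ht : 0 < t)
    (w : ℝ → ℝ)
    (hw : ∀ x : ℝ, 0 < x → w x = x ^ lam * Real.exp (-x ^ 3 - t / x))
    (P : ℕ → Polynomial ℝ) (h : ℕ → ℝ) (α β : ℕ → ℝ)
    (hP : ∀ n, (P n).Monic ∧ (P n).natDegree = n)
    (hpos : ∀ n, 0 < h n)
    (horth : ∀ m n, ∫ x in Set.Ioi (0 : ℝ),
        (P m).eval x * (P n).eval x * w x = if m = n then h n else 0)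
    (hrec : ∀ n, 1 ≤ n → ∀ x : ℝ, x * (P n).eval x
        = (P (n + 1)).eval x + α n * (P n).eval x + β n * (P (n - 1)).eval x)
    (hrec0 : ∀ x : ℝ, x * (P 0).eval x = (P 1).eval x + α 0 * (P 0).eval x)
    : ∀ n : ℕ, 1 ≤ n → ∀ x : ℝ, 0 < x →
      (1 / h (n - 1)) * (∫ y in Set.Ioi (0 : ℝ),
          (((3 * x ^ 2 - lam / x - t / x ^ 2) - (3 * y ^ 2 - lam / y - t / y ^ 2)) / (x - y))
            * (P n).eval y * (P (n - 1)).eval y * w y)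
        = 3 * β n + (3 * (α n + α (n - 1)) * β n - (n : ℝ)) / x
            + ((t / h (n - 1)) * ∫ y in Set.Ioi (0 : ℝ),
                y⁻¹ * (P n).eval y * (P (n - 1)).eval y * w y) / x ^ 2 := by
  rintro n hn x hx
  obtain ⟨m, rfl⟩ := Nat.exists_eq_add_of_le' hn
  have hint := integrableOn_zpow_mul_eval_mul ht hw
  set L := momentFunctional (volume.restrict (Ioi 0)) w fun Q => by
    simpa using (hint 0 Q).integrable
  have hL : ∀ Q, L Q = ∫ y in Ioi 0, Q.eval y * w y := momentFunctional_apply _ _ _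
  have horthL : ∀ i j, L (P i * P j) = if i = j then h j else 0 := fun i j => by
    simp only [hL, eval_mul, horth]
  have hrecX :
      ∀ n, X * P (n + 1) = P (n + 2) + C (α (n + 1)) * P (n + 1) + C (β (n + 1)) * P n :=
    fun n => Polynomial.funext fun y => by simpa using hrec (n + 1) (by omega) y
  have hrecX0 : X * P 0 = P 1 + C (α 0) * P 0 := Polynomial.funext fun y => by simpa using hrec0 y
  have hker := integral_airyKernel_mul (f := fun y => (P (m + 1) * P m).eval y * w y)
    (hint · _) lam t hx.ne'
  have hibp := integral_derivative_eval_mul_airyWeight ht hw (P (m + 1) * P m)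
  have hL1 := horthL (m + 1) m
  have hLX := map_X_mul_succ_mul horthL hrecX m
  have hLX2 := map_X_sq_mul_succ_mul hP horthL hrecX hrecX0 m
  have hLderiv := map_derivative_of_succ_mul hP horthL m
  simp only [hL, eval_mul, eval_X, eval_pow, mul_assoc] at hL1 hLX hLX2 hLderiv hibp hker ⊢
  simp only [Nat.add_sub_cancel, hker, hL1, hLX, hLX2, hLderiv, if_neg (Nat.succ_ne_self m)]
    at hibp ⊢
  set J1 := ∫ y in Ioi 0, y⁻¹ * ((P (m + 1)).eval y * ((P m).eval y * w y))
  set J2 := ∫ y in Ioi 0, (y ^ 2)⁻¹ * ((P (m + 1)).eval y * ((P m).eval y * w y))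
  have hhm := (hpos m).ne'
  field_simp
  push_cast
  linear_combination x * hibp

theorem stmt_1
    (lam t : ℝ) (hlam : -1 < lam) (ht : 0 < t)
    (w : ℝ → ℝ)
    (hw : ∀ x : ℝ, 0 < x → w x = x ^ lam * Real.exp (-x ^ 3 - t / x))
    (P : ℕ → Polynomial ℝ) (h : ℕ → ℝ) (α β : ℕ → ℝ)
    (hP : ∀ n, (P n).Monic ∧ (P n).natDegree = n)
    (hpos : ∀ n, 0 < h n)
    (horth : ∀ m n, ∫ x in Set.Ioi (0 : ℝ),
        (P m).eval x * (P n).eval x * w x = if m = n then h n else 0)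
    (hP0 : P 0 = 1)
    (hrec : ∀ n, 1 ≤ n → ∀ x : ℝ, x * (P n).eval x
        = (P (n + 1)).eval x + α n * (P n).eval x + β n * (P (n - 1)).eval x)
    (hrec0 : ∀ x : ℝ, x * (P 0).eval x = (P 1).eval x + α 0 * (P 0).eval x)
    : ∀ n : ℕ, 1 ≤ n → ∀ x : ℝ, 0 < x →
      (1 / h (n - 1)) * (∫ y in Set.Ioi (0 : ℝ),
          (((3 * x ^ 2 - lam / x - t / x ^ 2) - (3 * y ^ 2 - lam / y - t / y ^ 2)) / (x - y))
            * (P n).eval y * (P (n - 1)).eval y * w y)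
        = 3 * β n + (3 * (α n + α (n - 1)) * β n - (n : ℝ)) / x
            + ((t / h (n - 1)) * ∫ y in Set.Ioi (0 : ℝ),
                y⁻¹ * (P n).eval y * (P (n - 1)).eval y * w y) / x ^ 2 :=
  stmt_1_general lam t ht w hw P h α β hP hpos horth hrec hrec0
end

section
/- For every n ≥ 1, the auxiliary quantities satisfy r_n* + r_{n+1}* = t − α_n R_n*. -/
/-!
The recurrence `x Pₙ = Pₙ₊₁ + αₙ Pₙ + βₙ Pₙ₋₁`, divided by `x` and paired with `Pₙ w`, gives
`∫ x⁻¹ Pₙ₊₁ Pₙ w = hₙ - αₙ ∫ x⁻¹ Pₙ² w - βₙ ∫ x⁻¹ Pₙ Pₙ₋₁ w`, that is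
`rₙ₊₁* = t - αₙ Rₙ* - (βₙ hₙ₋₁ / hₙ) rₙ*`. Computing `∫ x Pₙ Pₙ₋₁ w` with the recurrence at `n`
and at `n - 1` gives the classical `βₙ hₙ₋₁ = hₙ`, which closes the identity. All the integrals
converge because `x ^ s e^{-x³ - t/x}` is integrable on `(0, ∞)` for every real `s` when `t > 0`.
-/

open MeasureTheory Polynomial Real Filter Asymptotics Topology Set

lemma exp_neg_div_isBigO_rpow {t : ℝ} (ht : 0 < t) (b : ℝ) :
    (fun x : ℝ => exp (-t / x)) =O[𝓝[>] 0] (· ^ b) := by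
  have h := ((isLittleO_exp_neg_mul_rpow_atTop ht (-b)).comp_tendsto
    tendsto_inv_nhdsGT_zero).isBigO
  refine (h.congr_left fun x => by simp [div_eq_mul_inv]).congr' .rfl ?_
  filter_upwards [self_mem_nhdsWithin] with x hx
  simp [inv_rpow (le_of_lt hx), rpow_neg (le_of_lt hx)]

lemma integrableOn_rpow_mul_exp_neg_cube_sub_div {t : ℝ} (ht : 0 < t) (s : ℝ) :
    IntegrableOn (fun x : ℝ => x ^ s * exp (-x ^ 3 - t / x)) (Ioi 0) := by
  have hcont : ContinuousOn (fun x : ℝ => exp (-x ^ 3 - t / x)) (Ioi 0) :=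
    fun x hx => by fun_prop (disch := exact ne_of_gt hx)
  have htop : (fun x : ℝ => exp (-x ^ 3 - t / x)) =O[atTop] (· ^ (-(s + 2))) := by
    refine IsBigO.trans ?_ (isLittleO_exp_neg_mul_rpow_atTop one_pos _).isBigO
    refine IsBigO.of_bound 1 ?_
    filter_upwards [eventually_ge_atTop 1] with x hx
    have : x ≤ x ^ 3 := le_self_pow₀ hx (by norm_num)
    have : 0 ≤ t / x := by positivity
    simp only [norm_eq_abs, abs_exp, one_mul, exp_le_exp]
    linarith
  have hbot : (fun x : ℝ => exp (-x ^ 3 - t / x)) =O[𝓝[>] 0] (· ^ (-s)) := by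
    refine IsBigO.trans ?_ (exp_neg_div_isBigO_rpow ht _)
    refine IsBigO.of_bound 1 ?_
    filter_upwards [self_mem_nhdsWithin] with x hx
    have : 0 ≤ x ^ 3 := pow_nonneg (le_of_lt hx) 3
    simp only [norm_eq_abs, abs_exp, one_mul, exp_le_exp, neg_div]
    linarith
  simpa using mellin_convergent_of_isBigO_scalar (s := s + 1)
    (hcont.locallyIntegrableOn measurableSet_Ioi) htop (by linarith) hbot (by linarith)

lemma integrableOn_inv_mul_eval_mul_weight (lam : ℝ) {t : ℝ} (ht : 0 < t) (Q : ℝ[X]) :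
    IntegrableOn (fun x : ℝ => x⁻¹ * Q.eval x * (x ^ lam * exp (-x ^ 3 - t / x))) (Ioi 0) := by
  have hsum : IntegrableOn (fun x : ℝ => ∑ i ∈ Finset.range (Q.natDegree + 1),
      Q.coeff i * (x ^ (lam - 1 + i) * exp (-x ^ 3 - t / x))) (Ioi 0) :=
    integrable_finsetSum _ fun i _ =>
      (integrableOn_rpow_mul_exp_neg_cube_sub_div ht _).const_mul _
  refine hsum.congr_fun (fun x (hx : 0 < x) => ?_) measurableSet_Ioi
  rw [eval_eq_sum_range, Finset.mul_sum, Finset.sum_mul]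
  refine Finset.sum_congr rfl fun i _ => ?_
  rw [rpow_add hx, rpow_sub_one hx.ne', rpow_natCast]
  field_simp

section ThreeTermRecurrence

variable {μ : Measure ℝ} {w : ℝ → ℝ}

lemma integrable_eval_mul_eval_mul
    (hint : ∀ Q : ℝ[X], Integrable (fun x => x⁻¹ * Q.eval x * w x) μ)
    (h0 : ∀ᵐ x ∂μ, x ≠ 0) (Q R : ℝ[X]) :
    Integrable (fun x => Q.eval x * R.eval x * w x) μ :=
  (hint (X * Q * R)).congr <| h0.mono fun x hx => by
    simp only [eval_mul, eval_X]
    field_simp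

variable {P : ℕ → ℝ[X]} {h : ℕ → ℝ}

lemma integral_X_mul_eval_mul_eval
    (horth : ∀ m n, ∫ x, (P m).eval x * (P n).eval x * w x ∂μ = if m = n then h n else 0)
    (hPP : ∀ m n, Integrable (fun x => (P m).eval x * (P n).eval x * w x) μ)
    {k j : ℕ} {a b : ℝ}
    (hrec : ∀ x : ℝ, x * (P k).eval x = (P (k + 1)).eval x + a * (P k).eval x + b * (P j).eval x)
    (l : ℕ) :
    ∫ x, x * (P k).eval x * (P l).eval x * w x ∂μ
      = (if k + 1 = l then h l else 0) + a * (if k = l then h l else 0)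
        + b * (if j = l then h l else 0) := by
  have hpt : ∀ x, x * (P k).eval x * (P l).eval x * w x
      = (P (k + 1)).eval x * (P l).eval x * w x
        + a * ((P k).eval x * (P l).eval x * w x) + b * ((P j).eval x * (P l).eval x * w x) :=
    fun x => by linear_combination ((P l).eval x * w x) * hrec x
  simp only [hpt]
  rw [integral_add, integral_add, integral_const_mul, integral_const_mul, horth, horth, horth]
  all_goals fun_prop

variable {α β : ℕ → ℝ}

lemma beta_succ_mul_eq
    (horth : ∀ m n, ∫ x, (P m).eval x * (P n).eval x * w x ∂μ = if m = n then h n else 0)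
    (hPP : ∀ m n, Integrable (fun x => (P m).eval x * (P n).eval x * w x) μ)
    (hrec : ∀ n, 1 ≤ n → ∀ x : ℝ, x * (P n).eval x
        = (P (n + 1)).eval x + α n * (P n).eval x + β n * (P (n - 1)).eval x)
    (hrec0 : ∀ x : ℝ, x * (P 0).eval x = (P 1).eval x + α 0 * (P 0).eval x) (n : ℕ) :
    β (n + 1) * h n = h (n + 1) := by
  have hdown := integral_X_mul_eval_mul_eval horth hPP (hrec (n + 1) le_add_self) n
  have hup : ∫ x, x * (P n).eval x * (P (n + 1)).eval x * w x ∂μ = h (n + 1) := by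
    rcases Nat.eq_zero_or_pos n with rfl | hn
    · have hrec0' : ∀ x : ℝ, x * (P 0).eval x
          = (P 1).eval x + α 0 * (P 0).eval x + 0 * (P 0).eval x := by simpa using hrec0
      simpa using integral_X_mul_eval_mul_eval horth hPP hrec0' 1
    · simpa [show n - 1 ≠ n + 1 by omega] using
        integral_X_mul_eval_mul_eval horth hPP (hrec n hn) (n + 1)
  simp only [Nat.add_sub_cancel, show n + 1 + 1 ≠ n by omega, show n + 1 ≠ n by omega,
    if_true, if_false, mul_zero, zero_add] at hdown
  rw [← hdown, ← hup]
  congr 1 with x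
  ring

lemma integral_inv_mul_eval_succ_mul_eval
    (hint : ∀ Q : ℝ[X], Integrable (fun x => x⁻¹ * Q.eval x * w x) μ)
    (h0 : ∀ᵐ x ∂μ, x ≠ 0) {k j : ℕ} {a b : ℝ}
    (hrec : ∀ x : ℝ, x * (P k).eval x = (P (k + 1)).eval x + a * (P k).eval x + b * (P j).eval x)
    (hk : ∫ x, (P k).eval x * (P k).eval x * w x ∂μ = h k) :
    ∫ x, x⁻¹ * (P (k + 1)).eval x * (P k).eval x * w x ∂μ
      = h k - a * ∫ x, x⁻¹ * (P k).eval x ^ 2 * w x ∂μ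
        - b * ∫ x, x⁻¹ * (P k).eval x * (P j).eval x * w x ∂μ := by
  have hsq : Integrable (fun x => x⁻¹ * (P k).eval x ^ 2 * w x) μ := by
    have := hint (P k ^ 2)
    simp only [eval_pow] at this
    exact this
  have hkj : Integrable (fun x => x⁻¹ * (P k).eval x * (P j).eval x * w x) μ := by
    simpa [mul_assoc] using hint (P k * P j)
  have hpt : ∀ᵐ x ∂μ, x⁻¹ * (P (k + 1)).eval x * (P k).eval x * w x
      = (P k).eval x * (P k).eval x * w x - a * (x⁻¹ * (P k).eval x ^ 2 * w x)
        - b * (x⁻¹ * (P k).eval x * (P j).eval x * w x) := h0.mono fun x hx => by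
    linear_combination (-(x⁻¹ * (P k).eval x * w x)) * hrec x
      + ((P k).eval x * (P k).eval x * w x) * inv_mul_cancel₀ hx
  rw [integral_congr_ae hpt, integral_sub _ (hkj.const_mul _),
    integral_sub (integrable_eval_mul_eval_mul hint h0 _ _) (hsq.const_mul _),
    integral_const_mul, integral_const_mul, hk]
  exact (integrable_eval_mul_eval_mul hint h0 _ _).sub (hsq.const_mul _)

end ThreeTermRecurrence

theorem stmt_4_general
    (lam t : ℝ) (ht : 0 < t)
    (w : ℝ → ℝ)
    (hw : ∀ x : ℝ, 0 < x → w x = x ^ lam * Real.exp (-x ^ 3 - t / x))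
    (P : ℕ → Polynomial ℝ) (h : ℕ → ℝ) (α β : ℕ → ℝ)
    (hpos : ∀ n, 0 < h n)
    (horth : ∀ m n, ∫ x in Set.Ioi (0 : ℝ),
        (P m).eval x * (P n).eval x * w x = if m = n then h n else 0)
    (hrec : ∀ n, 1 ≤ n → ∀ x : ℝ, x * (P n).eval x
        = (P (n + 1)).eval x + α n * (P n).eval x + β n * (P (n - 1)).eval x)
    (hrec0 : ∀ x : ℝ, x * (P 0).eval x = (P 1).eval x + α 0 * (P 0).eval x)
    (Rs : ℕ → ℝ)
    (hRs : ∀ m : ℕ, Rs m = (t / h m) * ∫ y in Set.Ioi (0 : ℝ),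
        y⁻¹ * ((P m).eval y) ^ 2 * w y)
    (rs : ℕ → ℝ)
    (hrs : ∀ m : ℕ, 1 ≤ m → rs m = (t / h (m - 1)) * ∫ y in Set.Ioi (0 : ℝ),
        y⁻¹ * (P m).eval y * (P (m - 1)).eval y * w y)
    : ∀ n : ℕ, 1 ≤ n → rs n + rs (n + 1) = t - α n * Rs n := by
  intro n hn
  obtain ⟨m, rfl⟩ := Nat.exists_eq_add_of_le' hn
  have hint : ∀ Q : ℝ[X], IntegrableOn (fun x => x⁻¹ * Q.eval x * w x) (Ioi 0) := fun Q =>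
    (integrableOn_inv_mul_eval_mul_weight lam ht Q).congr_fun
      (fun x hx => by rw [hw x hx]) measurableSet_Ioi
  have h0 : ∀ᵐ x ∂(volume.restrict (Ioi (0 : ℝ))), x ≠ 0 :=
    ae_restrict_of_forall_mem measurableSet_Ioi fun x hx => ne_of_gt hx
  have hβ := beta_succ_mul_eq horth (fun m n => integrable_eval_mul_eval_mul hint h0 _ _)
    hrec hrec0 m
  have hnext := integral_inv_mul_eval_succ_mul_eval hint h0 (hrec (m + 1) le_add_self)
    ((horth _ _).trans (if_pos rfl))
  rw [hrs (m + 1) le_add_self, hrs (m + 2) le_add_self, hRs, show m + 2 - 1 = m + 1 by omega,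
    hnext, Nat.add_sub_cancel]
  generalize ∫ x in Ioi 0, x⁻¹ * (P (m + 1)).eval x * (P m).eval x * w x = I
  have hm := (hpos m).ne'
  have hm1 := (hpos (m + 1)).ne'
  field_simp
  linear_combination -I * hβ

theorem stmt_4
    (lam t : ℝ) (hlam : -1 < lam) (ht : 0 < t)
    (w : ℝ → ℝ)
    (hw : ∀ x : ℝ, 0 < x → w x = x ^ lam * Real.exp (-x ^ 3 - t / x))
    (P : ℕ → Polynomial ℝ) (h : ℕ → ℝ) (α β : ℕ → ℝ)
    (hP : ∀ n, (P n).Monic ∧ (P n).natDegree = n)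
    (hpos : ∀ n, 0 < h n)
    (horth : ∀ m n, ∫ x in Set.Ioi (0 : ℝ),
        (P m).eval x * (P n).eval x * w x = if m = n then h n else 0)
    (hP0 : P 0 = 1)
    (hrec : ∀ n, 1 ≤ n → ∀ x : ℝ, x * (P n).eval x
        = (P (n + 1)).eval x + α n * (P n).eval x + β n * (P (n - 1)).eval x)
    (hrec0 : ∀ x : ℝ, x * (P 0).eval x = (P 1).eval x + α 0 * (P 0).eval x)
    (Rs : ℕ → ℝ)
    (hRs : ∀ m : ℕ, Rs m = (t / h m) * ∫ y in Set.Ioi (0 : ℝ),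
        y⁻¹ * ((P m).eval y) ^ 2 * w y)
    (rs : ℕ → ℝ)
    (hrs : ∀ m : ℕ, 1 ≤ m → rs m = (t / h (m - 1)) * ∫ y in Set.Ioi (0 : ℝ),
        y⁻¹ * (P m).eval y * (P (m - 1)).eval y * w y)
    : ∀ n : ℕ, 1 ≤ n → rs n + rs (n + 1) = t - α n * Rs n :=
  stmt_4_general lam t ht w hw P h α β hpos horth hrec hrec0 Rs hRs rs hrs
end

section
/- For every n ≥ 1, the auxiliary quantity R_n* is expressed in terms of the recurrence coefficients as R_n* = r_n + r_{n+1} + α_n R_n − λ, where R_n := 3(α_n² + β_n + β_{n+1}) and r_n := 3(α_n + α_{n−1})β_n − n. -/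
open MeasureTheory Polynomial Real Filter
open Set Topology

/-!
Integrating the derivative of `x ^ (λ + 1) * P_n(x) ^ 2 * exp (-x ^ 3 - t / x)` over `(0, ∞)`,
where both boundary terms vanish because `t > 0`, gives
`(λ + 1) h_n + 2 ∫ x P_n P_n' w - 3 ∫ x³ P_n² w + t ∫ x⁻¹ P_n² w = 0`.
By orthogonality `∫ x P_n P_n' w = n h_n`, since `x P_n' - n P_n` has degree `< n`; expanding
`x (x P_n)²` with the three-term recurrence and using `h_{n+1} = β_{n+1} h_n` gives
`∫ x³ P_n² w = h_n (α_{n+1} β_{n+1} + α_n³ + β_n α_{n-1} + 2 α_n (β_n + β_{n+1}))`.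
Solving for `R_n*` yields the formula.
-/

namespace Polynomial

variable {R : Type*} [CommRing R]

theorem degree_sub_lt_of_monic [Nontrivial R] {p q : R[X]} {n : ℕ} (hp : p.Monic) (hq : q.Monic)
    (hpn : p.natDegree = n) (hqn : q.natDegree = n) : (p - q).degree < n := by
  have hdeg : p.degree = n := by rw [degree_eq_natDegree hp.ne_zero, hpn]
  refine hdeg ▸ degree_sub_lt_left ?_ hp.ne_zero (by rw [hp.leadingCoeff, hq.leadingCoeff])
  rw [hdeg, degree_eq_natDegree hq.ne_zero, hqn]

theorem degree_X_mul_derivative_sub_lt {p : R[X]} {n : ℕ} (hp : p.Monic) (hpn : p.natDegree = n) :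
    (X * derivative p - n • p).degree < (n : WithBot ℕ) := by
  rw [degree_lt_iff_coeff_zero]
  intro j hj
  rcases j with _ | k
  · simp [Nat.le_zero.mp hj]
  · rw [coeff_sub, coeff_X_mul, coeff_derivative, coeff_smul]
    rcases hj.eq_or_lt with rfl | hlt
    · simp [hpn ▸ hp.coeff_natDegree]
    · simp [coeff_eq_zero_of_natDegree_lt (hpn ▸ hlt : p.natDegree < k + 1)]

end Polynomial

namespace OrthogonalPolynomials

variable {R : Type*} [CommRing R] (L : R[X] →ₗ[R] R) {P : ℕ → R[X]} {h α β : ℕ → R}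
  (horth : ∀ m n, L (P m * P n) = if m = n then h n else 0)
include horth

theorem apply_mul_self {n : ℕ} : L (P n * P n) = h n := by simp [horth]

theorem apply_mul_of_ne {m n : ℕ} (hmn : m ≠ n) : L (P m * P n) = 0 := by simp [horth, hmn]

section Degree

variable [Nontrivial R] (hmonic : ∀ n, (P n).Monic) (hdeg : ∀ n, (P n).natDegree = n)
include hmonic hdeg

theorem apply_mul_eq_zero_of_degree_lt {m : ℕ} {q : R[X]} (hq : q.degree < m) :
    L (P m * q) = 0 := by
  let S : Sequence R := ⟨P, fun i => by rw [degree_eq_natDegree (hmonic i).ne_zero, hdeg i]⟩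
  have hspan : q ∈ Submodule.span R (P '' Iio m) := by
    rw [S.span_degreeLT fun i _ => by simp [S, hmonic i]]
    exact mem_degreeLT.mpr hq
  have hker : Submodule.span R (P '' Iio m) ≤
      LinearMap.ker (L ∘ₗ LinearMap.mulLeft R (P m)) := by
    rw [Submodule.span_le]
    rintro _ ⟨i, hi, rfl⟩
    exact apply_mul_of_ne L horth (ne_of_gt hi)
  exact hker hspan

theorem apply_X_mul_succ_mul (n : ℕ) : L (X * P (n + 1) * P n) = h (n + 1) := by
  have hlow : (X * P n - P (n + 1)).degree < ↑(n + 1) :=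
    degree_sub_lt_of_monic (monic_X.mul (hmonic n)) (hmonic (n + 1))
      (by rw [natDegree_X_mul (hmonic n).ne_zero, hdeg]) (hdeg (n + 1))
  calc L (X * P (n + 1) * P n)
      = L (P (n + 1) * P (n + 1)) + L (P (n + 1) * (X * P n - P (n + 1))) := by
        rw [← map_add]; ring_nf
    _ = h (n + 1) := by
        rw [apply_mul_self L horth, apply_mul_eq_zero_of_degree_lt L horth hmonic hdeg hlow,
          add_zero]

theorem apply_X_mul_add_two_mul (n : ℕ) : L (X * P (n + 2) * P n) = 0 := by
  have hlow : (X * P n).degree < ↑(n + 2) := by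
    rw [degree_eq_natDegree (monic_X.mul (hmonic n)).ne_zero, natDegree_X_mul (hmonic n).ne_zero,
      hdeg]
    exact_mod_cast (n + 1).lt_succ_self
  rw [show X * P (n + 2) * P n = P (n + 2) * (X * P n) by ring]
  exact apply_mul_eq_zero_of_degree_lt L horth hmonic hdeg hlow

theorem apply_X_mul_mul_derivative (n : ℕ) : L (X * P n * derivative (P n)) = n * h n := by
  have hlow := degree_X_mul_derivative_sub_lt (hmonic n) (hdeg n)
  calc L (X * P n * derivative (P n))
      = L (n • (P n * P n)) + L (P n * (X * derivative (P n) - n • P n)) := by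
        rw [← map_add]; ring_nf
    _ = n * h n := by
        rw [apply_mul_eq_zero_of_degree_lt L horth hmonic hdeg hlow, map_nsmul,
          apply_mul_self L horth, add_zero, nsmul_eq_mul]

end Degree

section Recurrence

variable (hrec : ∀ n, X * P (n + 1) = P (n + 2) + α (n + 1) • P (n + 1) + β (n + 1) • P n)
include hrec

theorem apply_X_mul_mul_self (hrec0 : X * P 0 = P 1 + α 0 • P 0) (n : ℕ) :
    L (X * P n * P n) = α n * h n := by
  rw [mul_right_comm, mul_comm]
  cases n with
  | zero => simp [hrec0, mul_add, horth]
  | succ n => simp [hrec n, mul_add, horth]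

variable [Nontrivial R] (hmonic : ∀ n, (P n).Monic) (hdeg : ∀ n, (P n).natDegree = n)
include hmonic hdeg

theorem beta_succ_mul (n : ℕ) : β (n + 1) * h n = h (n + 1) := by
  rw [← apply_X_mul_succ_mul L horth hmonic hdeg, hrec]
  simp [add_mul, horth]

theorem apply_X_pow_three_mul_mul_self (hrec0 : X * P 0 = P 1 + α 0 • P 0) (n : ℕ) :
    L (X ^ 3 * P (n + 1) * P (n + 1)) = h (n + 1) * (α (n + 2) * β (n + 2) + α (n + 1) ^ 3
      + β (n + 1) * α n + 2 * α (n + 1) * (β (n + 1) + β (n + 2))) := by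
  have hexpand : X ^ 3 * P (n + 1) * P (n + 1) = X * P (n + 2) * P (n + 2)
      + α (n + 1) ^ 2 • (X * P (n + 1) * P (n + 1)) + β (n + 1) ^ 2 • (X * P n * P n)
      + (2 * α (n + 1)) • (X * P (n + 2) * P (n + 1))
      + (2 * β (n + 1)) • (X * P (n + 2) * P n)
      + (2 * α (n + 1) * β (n + 1)) • (X * P (n + 1) * P n) := by
    have hrec' := hrec n
    simp only [smul_eq_C_mul, map_mul, map_pow, map_ofNat] at hrec' ⊢
    linear_combination (X * (X * P (n + 1) + P (n + 2) + C (α (n + 1)) * P (n + 1)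
      + C (β (n + 1)) * P n)) * hrec'
  have hβ := beta_succ_mul L horth hrec hmonic hdeg
  simp only [hexpand, map_add, map_smul, smul_eq_mul, apply_X_mul_mul_self L horth hrec hrec0,
    apply_X_mul_succ_mul L horth hmonic hdeg, apply_X_mul_add_two_mul L horth hmonic hdeg]
  linear_combination -(α (n + 2) + 2 * α (n + 1)) * hβ (n + 1) + β (n + 1) * α n * hβ n

end Recurrence

end OrthogonalPolynomials

open OrthogonalPolynomials

noncomputable def weightedIntegral (w : ℝ → ℝ) (S : Set ℝ)
    (hw : ∀ q : ℝ[X], IntegrableOn (fun x => q.eval x * w x) S) : ℝ[X] →ₗ[ℝ] ℝ where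
  toFun q := ∫ x in S, q.eval x * w x
  map_add' p q := by
    simp only [eval_add, add_mul]
    exact integral_add (hw p) (hw q)
  map_smul' c q := by
    simp only [eval_smul, smul_eq_mul, mul_assoc, RingHom.id_apply]
    exact integral_const_mul c _

/- Unlike `integral_Ioi_of_hasDerivAt_of_tendsto`, the value `f a` plays no role: at `a = 0`
the weight below only has a one-sided limit, its value there is junk. -/
theorem integral_Ioi_of_hasDerivAt_of_tendsto_nhdsGT {f f' : ℝ → ℝ} {a m₀ m : ℝ}
    (hderiv : ∀ x ∈ Ioi a, HasDerivAt f (f' x) x) (f'int : IntegrableOn f' (Ioi a))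
    (ha : Tendsto f (𝓝[>] a) (𝓝 m₀)) (hf : Tendsto f atTop (𝓝 m)) :
    ∫ x in Ioi a, f' x = m - m₀ := by
  have hupd : ∀ l : Filter ℝ, (∀ᶠ x in l, a < x) → Function.update f a m₀ =ᶠ[l] f :=
    fun l hl => by filter_upwards [hl] with x hx using Function.update_of_ne hx.ne' _ _
  have := integral_Ioi_of_hasDerivAt_of_tendsto (f := Function.update f a m₀)
    (by simpa [continuousWithinAt_update_same] using ha)
    (fun x hx => (hderiv x hx).congr_of_eventuallyEq (hupd _ (lt_mem_nhds hx))) f'int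
    (hf.congr' (hupd _ (eventually_gt_atTop a)).symm)
  simpa using this

noncomputable def perturbedAiryWeight (s t x : ℝ) : ℝ := x ^ s * exp (-x ^ 3 - t / x)

section PerturbedAiryWeight

variable {s t x : ℝ}

theorem rpow_mul_perturbedAiryWeight (hx : 0 < x) (a : ℝ) :
    x ^ a * perturbedAiryWeight s t x = perturbedAiryWeight (s + a) t x := by
  rw [perturbedAiryWeight, perturbedAiryWeight, rpow_add hx]
  ring

theorem eval_mul_perturbedAiryWeight (hx : 0 < x) (q : ℝ[X]) :
    q.eval x * perturbedAiryWeight s t x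
      = ∑ i ∈ Finset.range (q.natDegree + 1), q.coeff i * perturbedAiryWeight (s + i) t x := by
  rw [eval_eq_sum_range, Finset.sum_mul]
  refine Finset.sum_congr rfl fun i _ => ?_
  rw [← rpow_mul_perturbedAiryWeight hx, rpow_natCast]
  ring

theorem measurable_perturbedAiryWeight : Measurable (perturbedAiryWeight s t) := by
  unfold perturbedAiryWeight
  fun_prop

theorem continuousOn_perturbedAiryWeight : ContinuousOn (perturbedAiryWeight s t) (Ioi 0) := by
  intro x hx
  have hx : x ≠ 0 := (mem_Ioi.mp hx).ne'
  have hexp : ContinuousAt (fun x => exp (-x ^ 3 - t / x)) x := by fun_prop (disch := exact hx)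
  exact ((continuousAt_id.rpow_const (Or.inl hx)).mul hexp).continuousWithinAt

theorem tendsto_perturbedAiryWeight_nhdsGT_zero (ht : 0 < t) (s : ℝ) :
    Tendsto (perturbedAiryWeight s t) (𝓝[>] 0) (𝓝 0) := by
  have hsing : Tendsto (fun x : ℝ => x ^ s * exp (-t * x⁻¹)) (𝓝[>] 0) (𝓝 0) := by
    refine ((tendsto_rpow_mul_exp_neg_mul_atTop_nhds_zero (-s) t ht).comp
      tendsto_inv_nhdsGT_zero).congr' ?_
    filter_upwards [self_mem_nhdsWithin] with x hx
    simp [inv_rpow (le_of_lt hx), rpow_neg (le_of_lt hx)]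
  have hcube : Tendsto (fun x : ℝ => exp (-x ^ 3)) (𝓝[>] 0) (𝓝 1) := by
    have hcont : Continuous fun x : ℝ => exp (-x ^ 3) := by fun_prop
    simpa using (hcont.tendsto 0).mono_left nhdsWithin_le_nhds
  refine Tendsto.congr (fun x => ?_) (by simpa using hsing.mul hcube)
  rw [perturbedAiryWeight, mul_assoc, ← exp_add]
  ring_nf

theorem tendsto_perturbedAiryWeight_atTop (ht : 0 ≤ t) (s : ℝ) :
    Tendsto (perturbedAiryWeight s t) atTop (𝓝 0) := by
  have hexp := tendsto_rpow_mul_exp_neg_mul_atTop_nhds_zero s 1 one_pos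
  refine squeeze_zero' ?_ ?_ (by simpa using hexp)
  · filter_upwards [eventually_gt_atTop 0] with x hx
    exact mul_nonneg (rpow_nonneg hx.le _) (exp_pos _).le
  · filter_upwards [eventually_ge_atTop 1] with x hx
    refine mul_le_mul_of_nonneg_left (exp_le_exp.mpr ?_) (rpow_nonneg (by linarith) _)
    have htx : 0 ≤ t / x := div_nonneg ht (by linarith)
    linarith [le_self_pow₀ hx (by norm_num : 3 ≠ 0)]

theorem integrableOn_perturbedAiryWeight (ht : 0 < t) (s : ℝ) :
    IntegrableOn (perturbedAiryWeight s t) (Ioi 0) := by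
  have hmeas : ∀ l : Filter ℝ, StronglyMeasurableAtFilter (perturbedAiryWeight s t) l :=
    fun l => measurable_perturbedAiryWeight.aestronglyMeasurable.stronglyMeasurableAtFilter
  rw [integrableOn_Ioi_iff_integrableAtFilter_atTop_nhdsWithin]
  refine ⟨?_, (tendsto_perturbedAiryWeight_nhdsGT_zero ht s).integrableAtFilter (hmeas _)
    (volume.finiteAt_nhdsWithin _ _), continuousOn_perturbedAiryWeight.locallyIntegrableOn
    measurableSet_Ioi⟩
  have hbigO : perturbedAiryWeight s t =O[atTop] fun x => x ^ (-2 : ℝ) := by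
    have := ((tendsto_perturbedAiryWeight_atTop ht.le (s + 2)).isBigO_one ℝ).mul
      (Asymptotics.isBigO_refl (fun x : ℝ => x ^ (-2 : ℝ)) atTop)
    refine this.congr' ?_ (by simp)
    filter_upwards [eventually_gt_atTop 0] with x hx
    rw [mul_comm, rpow_mul_perturbedAiryWeight hx]
    ring_nf
  exact hbigO.integrableAtFilter (hmeas _) (integrableAtFilter_rpow_atTop_iff.mpr (by norm_num))

theorem tendsto_eval_mul_perturbedAiryWeight_nhdsGT_zero (ht : 0 < t) (s : ℝ) (q : ℝ[X]) :
    Tendsto (fun x => q.eval x * perturbedAiryWeight s t x) (𝓝[>] 0) (𝓝 0) := by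
  simpa using ((q.continuous.tendsto 0).mono_left nhdsWithin_le_nhds).mul
    (tendsto_perturbedAiryWeight_nhdsGT_zero ht s)

theorem tendsto_eval_mul_perturbedAiryWeight_atTop (ht : 0 ≤ t) (s : ℝ) (q : ℝ[X]) :
    Tendsto (fun x => q.eval x * perturbedAiryWeight s t x) atTop (𝓝 0) := by
  have hsum := tendsto_finsetSum (Finset.range (q.natDegree + 1)) fun i _ =>
    (tendsto_perturbedAiryWeight_atTop ht (s + i)).const_mul (q.coeff i)
  simp only [mul_zero, Finset.sum_const_zero] at hsum
  refine hsum.congr' ?_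
  filter_upwards [eventually_gt_atTop 0] with x hx
  exact (eval_mul_perturbedAiryWeight hx q).symm

theorem integrableOn_eval_mul_perturbedAiryWeight (ht : 0 < t) (s : ℝ) (q : ℝ[X]) :
    IntegrableOn (fun x => q.eval x * perturbedAiryWeight s t x) (Ioi 0) := by
  have hsum := integrable_finsetSum (Finset.range (q.natDegree + 1)) fun i _ =>
    (integrableOn_perturbedAiryWeight ht (s + i)).const_mul (q.coeff i)
  refine IntegrableOn.congr_fun hsum (fun x hx => ?_) measurableSet_Ioi
  simp [eval_mul_perturbedAiryWeight hx q]

theorem hasDerivAt_perturbedAiryWeight (hx : 0 < x) :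
    HasDerivAt (perturbedAiryWeight s t)
      ((s / x - 3 * x ^ 2 + t / x ^ 2) * perturbedAiryWeight s t x) x := by
  have hpow : HasDerivAt (fun y => y ^ s) (s * x ^ (s - 1)) x :=
    hasDerivAt_rpow_const (Or.inl hx.ne')
  have hexp : HasDerivAt (fun y => exp (-y ^ 3 - t / y))
      (exp (-x ^ 3 - t / x) * (-(3 * x ^ 2) + t / x ^ 2)) x := by
    have h := ((hasDerivAt_pow 3 x).fun_neg.fun_sub ((hasDerivAt_inv hx.ne').const_mul t)).exp
    simp only [div_eq_mul_inv]
    convert h using 1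
    field_simp
    ring
  refine (hpow.mul hexp).congr_deriv ?_
  rw [perturbedAiryWeight, rpow_sub_one hx.ne']
  field_simp
  ring

theorem integral_perturbedAiryWeight_by_parts (ht : 0 < t) (s : ℝ) (q : ℝ[X]) :
    ∫ x in Ioi 0, ((s + 1) • q + X * derivative q - (3 : ℝ) • (X ^ 3 * q)).eval x
        * perturbedAiryWeight s t x
      = -t * ∫ x in Ioi 0, x⁻¹ * q.eval x * perturbedAiryWeight s t x := by
  set D := (s + 1) • q + X * derivative q - (3 : ℝ) • (X ^ 3 * q)
  have hinv : ∀ x ∈ Ioi (0 : ℝ),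
      x⁻¹ * q.eval x * perturbedAiryWeight s t x
        = q.eval x * perturbedAiryWeight (s - 1) t x := by
    intro x hx
    rw [mul_comm x⁻¹, mul_assoc, ← rpow_neg_one, rpow_mul_perturbedAiryWeight hx,
      sub_eq_add_neg]
  have hint₁ := integrableOn_eval_mul_perturbedAiryWeight ht s D
  have hint₂ :
      IntegrableOn (fun x => t * (x⁻¹ * q.eval x * perturbedAiryWeight s t x)) (Ioi 0) :=
    ((integrableOn_eval_mul_perturbedAiryWeight ht (s - 1) q).congr_fun
      (fun x hx => (hinv x hx).symm) measurableSet_Ioi).const_mul t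
  have hderiv : ∀ x ∈ Ioi 0, HasDerivAt (fun x => q.eval x * perturbedAiryWeight (s + 1) t x)
      (D.eval x * perturbedAiryWeight s t x
        + t * (x⁻¹ * q.eval x * perturbedAiryWeight s t x)) x := by
    intro x hx
    have hx0 : x ≠ 0 := (mem_Ioi.mp hx).ne'
    refine ((q.hasDerivAt x).mul (hasDerivAt_perturbedAiryWeight hx)).congr_deriv ?_
    rw [← rpow_mul_perturbedAiryWeight hx, rpow_one]
    simp only [D, eval_sub, eval_add, eval_smul, eval_mul, eval_X, eval_pow, smul_eq_mul]
    field_simp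
    ring
  have hFTC := integral_Ioi_of_hasDerivAt_of_tendsto_nhdsGT hderiv (hint₁.add hint₂)
    (tendsto_eval_mul_perturbedAiryWeight_nhdsGT_zero ht _ q)
    (tendsto_eval_mul_perturbedAiryWeight_atTop ht.le _ q)
  rw [integral_add hint₁ hint₂, integral_const_mul, sub_zero] at hFTC
  linarith

theorem integral_perturbedAiryWeight_by_parts_sq (ht : 0 < t) (s : ℝ) (p : ℝ[X]) :
    ∫ x in Ioi 0, ((s + 1) • (p * p) + (2 : ℝ) • (X * p * derivative p)
        - (3 : ℝ) • (X ^ 3 * p * p)).eval x * perturbedAiryWeight s t x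
      = -t * ∫ x in Ioi 0, x⁻¹ * p.eval x ^ 2 * perturbedAiryWeight s t x := by
  have hq :
      (s + 1) • (p * p) + (2 : ℝ) • (X * p * derivative p) - (3 : ℝ) • (X ^ 3 * p * p)
        = (s + 1) • p ^ 2 + X * derivative (p ^ 2) - (3 : ℝ) • (X ^ 3 * p ^ 2) := by
    simp only [derivative_sq, smul_eq_C_mul]
    ring
  have h := integral_perturbedAiryWeight_by_parts ht s (p ^ 2)
  simp_rw [eval_pow] at h
  rwa [hq]

end PerturbedAiryWeight

theorem stmt_5_general
    (lam t : ℝ) (ht : 0 < t)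
    (w : ℝ → ℝ)
    (hw : ∀ x : ℝ, 0 < x → w x = x ^ lam * Real.exp (-x ^ 3 - t / x))
    (P : ℕ → Polynomial ℝ) (h : ℕ → ℝ) (α β : ℕ → ℝ)
    (hP : ∀ n, (P n).Monic ∧ (P n).natDegree = n)
    (hpos : ∀ n, 0 < h n)
    (horth : ∀ m n, ∫ x in Set.Ioi (0 : ℝ),
        (P m).eval x * (P n).eval x * w x = if m = n then h n else 0)
    (hrec : ∀ n, 1 ≤ n → ∀ x : ℝ, x * (P n).eval x
        = (P (n + 1)).eval x + α n * (P n).eval x + β n * (P (n - 1)).eval x)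
    (hrec0 : ∀ x : ℝ, x * (P 0).eval x = (P 1).eval x + α 0 * (P 0).eval x)
    (Rs : ℕ → ℝ)
    (hRs : ∀ m : ℕ, Rs m = (t / h m) * ∫ y in Set.Ioi (0 : ℝ),
        y⁻¹ * ((P m).eval y) ^ 2 * w y)
    (R : ℕ → ℝ) (hR : ∀ m : ℕ, R m = 3 * ((α m) ^ 2 + β m + β (m + 1)))
    (r : ℕ → ℝ)
    (hr : ∀ m : ℕ, 1 ≤ m → r m = 3 * (α m + α (m - 1)) * β m - (m : ℝ))
    : ∀ n : ℕ, 1 ≤ n → Rs n = r n + r (n + 1) + α n * R n - lam := by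
  have hwW : ∀ f : ℝ → ℝ, ∫ x in Ioi 0, f x * w x
      = ∫ x in Ioi 0, f x * perturbedAiryWeight lam t x := fun f =>
    setIntegral_congr_fun measurableSet_Ioi fun x hx => by rw [hw x hx, perturbedAiryWeight]
  let L := weightedIntegral (perturbedAiryWeight lam t) (Ioi 0)
    (integrableOn_eval_mul_perturbedAiryWeight ht lam)
  have hLorth : ∀ m n, L (P m * P n) = if m = n then h n else 0 := fun m n => by
    rw [← horth, hwW]
    simp [L, weightedIntegral, eval_mul]
  have hmonic n := (hP n).1
  have hdeg n := (hP n).2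
  have hrecX n : X * P (n + 1) = P (n + 2) + α (n + 1) • P (n + 1) + β (n + 1) • P n :=
    Polynomial.funext fun x => by simpa using hrec (n + 1) (by omega) x
  have hrecX0 : X * P 0 = P 1 + α 0 • P 0 := Polynomial.funext fun x => by simpa using hrec0 x
  intro n hn
  obtain ⟨k, rfl⟩ := Nat.exists_eq_add_of_le' hn
  have hparts := integral_perturbedAiryWeight_by_parts_sq ht lam (P (k + 1))
  change L _ = _ at hparts
  simp only [map_sub, map_add, map_smul, smul_eq_mul, apply_mul_self L hLorth,
    apply_X_mul_mul_derivative L hLorth hmonic hdeg,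
    apply_X_pow_three_mul_mul_self L hLorth hrecX hmonic hdeg hrecX0] at hparts
  rw [hRs, hwW, hr (k + 1) hn, hr (k + 1 + 1) (by omega), hR, div_mul_eq_mul_div,
    div_eq_iff (hpos (k + 1)).ne']
  push_cast at hparts ⊢
  linear_combination hparts

theorem stmt_5
    (lam t : ℝ) (hlam : -1 < lam) (ht : 0 < t)
    (w : ℝ → ℝ)
    (hw : ∀ x : ℝ, 0 < x → w x = x ^ lam * Real.exp (-x ^ 3 - t / x))
    (P : ℕ → Polynomial ℝ) (h : ℕ → ℝ) (α β : ℕ → ℝ)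
    (hP : ∀ n, (P n).Monic ∧ (P n).natDegree = n)
    (hpos : ∀ n, 0 < h n)
    (horth : ∀ m n, ∫ x in Set.Ioi (0 : ℝ),
        (P m).eval x * (P n).eval x * w x = if m = n then h n else 0)
    (hP0 : P 0 = 1)
    (hrec : ∀ n, 1 ≤ n → ∀ x : ℝ, x * (P n).eval x
        = (P (n + 1)).eval x + α n * (P n).eval x + β n * (P (n - 1)).eval x)
    (hrec0 : ∀ x : ℝ, x * (P 0).eval x = (P 1).eval x + α 0 * (P 0).eval x)
    (Rs : ℕ → ℝ)
    (hRs : ∀ m : ℕ, Rs m = (t / h m) * ∫ y in Set.Ioi (0 : ℝ),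
        y⁻¹ * ((P m).eval y) ^ 2 * w y)
    (R : ℕ → ℝ) (hR : ∀ m : ℕ, R m = 3 * ((α m) ^ 2 + β m + β (m + 1)))
    (r : ℕ → ℝ)
    (hr : ∀ m : ℕ, 1 ≤ m → r m = 3 * (α m + α (m - 1)) * β m - (m : ℝ))
    : ∀ n : ℕ, 1 ≤ n → Rs n = r n + r (n + 1) + α n * R n - lam :=
  stmt_5_general lam t ht w hw P h α β hP hpos horth hrec hrec0 Rs hRs R hR r hr
end

section
/- For every n ≥ 1, the auxiliary quantities satisfy r_n*(r_n* − t) = β_n R_n* R_{n−1}*. -/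
open MeasureTheory Polynomial Real Filter

/-!
Write `P_m(y) = y (P_m / X)(y) + P_m(0)`, where `P_m / X = divX (P_m)` has degree `< m`. Then
`∫ y⁻¹ P_m P_k w = ∫ (P_m / X) P_k w + P_m(0) J_k` with `J_k = ∫ y⁻¹ P_k w`. The first term
vanishes by orthogonality when `(m, k) = (n, n)` or `(n - 1, n)`, and equals `h_{n-1}` when
`(m, k) = (n, n - 1)` because `P_n / X` is monic of degree `n - 1`. Hence
`R_n* = (t / h_n) P_n(0) J_n`, `r_n* = (t / h_{n-1}) P_{n-1}(0) J_n` and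
`r_n* - t = (t / h_{n-1}) P_n(0) J_{n-1}`, and the identity reduces to `β_n = h_n / h_{n-1}`.
The weight matters only for the integrability of `y⁻¹ p w` near `0`, which follows from
`y⁻¹ e^{-t/y} ≤ 1/t` and `λ > -1`.
-/

namespace Polynomial

variable {R : Type*}

theorem Monic.divX [Semiring R] {p : R[X]} (hp : p.Monic) (hdeg : 0 < p.natDegree) :
    p.divX.Monic := by
  show p.divX.coeff p.divX.natDegree = 1
  rw [natDegree_divX_eq_natDegree_tsub_one, coeff_divX, Nat.sub_add_cancel hdeg]
  exact hp

variable [Ring R] [Nontrivial R] {P : ℕ → R[X]}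

theorem mem_span_image_Iio_of_monic (hP : ∀ n, (P n).Monic ∧ (P n).natDegree = n) {n : ℕ}
    {p : R[X]} (hp : p.degree < n) : p ∈ Submodule.span R (P '' Set.Iio n) := by
  let S : Sequence R := ⟨P, fun i => by rw [degree_eq_natDegree (hP i).1.ne_zero, (hP i).2]⟩
  have hspan := S.span_degreeLT (m := n) fun i _ => by
    show IsUnit (P i).leadingCoeff
    exact (hP i).1.leadingCoeff ▸ isUnit_one
  exact hspan ▸ mem_degreeLT.mpr hp

theorem mem_span_range_of_monic (hP : ∀ n, (P n).Monic ∧ (P n).natDegree = n) (p : R[X]) :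
    p ∈ Submodule.span R (Set.range P) :=
  Submodule.span_mono (Set.image_subset_range _ _) <| mem_span_image_Iio_of_monic hP <|
    degree_le_natDegree.trans_lt <| WithBot.coe_lt_coe.mpr p.natDegree.lt_succ_self

end Polynomial

section OrthogonalPolynomials

variable {μ : Measure ℝ} {w : ℝ → ℝ} {P : ℕ → ℝ[X]} {h : ℕ → ℝ}

theorem integrable_mul_mul_of_integrable_sq {f g : ℝ → ℝ} (hw0 : 0 ≤ᵐ[μ] w)
    (hm : AEStronglyMeasurable (fun x => f x * g x * w x) μ)
    (hf : Integrable (fun x => f x * f x * w x) μ) (hg : Integrable (fun x => g x * g x * w x) μ) :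
    Integrable (fun x => f x * g x * w x) μ := by
  refine (hf.add hg).mono' hm ?_
  filter_upwards [hw0] with x hx
  rw [norm_mul, norm_mul, Real.norm_of_nonneg hx, Pi.add_apply, ← add_mul, ← abs_mul_abs_self,
    ← abs_mul_abs_self (g x), ← Real.norm_eq_abs, ← Real.norm_eq_abs]
  gcongr
  nlinarith [mul_self_nonneg (‖f x‖ - ‖g x‖), mul_nonneg (norm_nonneg (f x)) (norm_nonneg (g x))]

structure IsMonicOrthogonal (μ : Measure ℝ) (w : ℝ → ℝ) (P : ℕ → ℝ[X]) (h : ℕ → ℝ) : Prop where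
  monic : ∀ n, (P n).Monic
  natDegree_eq : ∀ n, (P n).natDegree = n
  integral_eq : ∀ m n, ∫ x, (P m).eval x * (P n).eval x * w x ∂μ = if m = n then h n else 0
  integrable : ∀ p : ℝ[X], Integrable (fun x => p.eval x * w x) μ

noncomputable def RStar (μ : Measure ℝ) (w : ℝ → ℝ) (P : ℕ → ℝ[X]) (h : ℕ → ℝ) (t : ℝ) (m : ℕ) :
    ℝ :=
  t / h m * ∫ y, y⁻¹ * (P m).eval y ^ 2 * w y ∂μ

noncomputable def rStar (μ : Measure ℝ) (w : ℝ → ℝ) (P : ℕ → ℝ[X]) (h : ℕ → ℝ) (t : ℝ) (m : ℕ) :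
    ℝ :=
  t / h (m - 1) * ∫ y, y⁻¹ * (P m).eval y * (P (m - 1)).eval y * w y ∂μ

namespace IsMonicOrthogonal

theorem of_nonneg (hP : ∀ n, (P n).Monic ∧ (P n).natDegree = n)
    (horth : ∀ m n, ∫ x, (P m).eval x * (P n).eval x * w x ∂μ = if m = n then h n else 0)
    (hh : ∀ n, h n ≠ 0) (hw0 : 0 ≤ᵐ[μ] w)
    (hwm : AEStronglyMeasurable w μ) : IsMonicOrthogonal μ w P h := by
  have hdiag (n : ℕ) : Integrable (fun x => (P n).eval x * (P n).eval x * w x) μ := by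
    by_contra hn
    have := horth n n
    rw [if_pos rfl, integral_undef hn] at this
    exact hh n this.symm
  have hP0 : P 0 = 1 := eq_one_of_monic_natDegree_zero (hP 0).1 (hP 0).2
  refine ⟨fun n => (hP n).1, fun n => (hP n).2, horth, fun p => ?_⟩
  induction mem_span_range_of_monic hP p using Submodule.span_induction with
  | mem _ hq =>
    obtain ⟨n, rfl⟩ := hq
    have hmeas := ((P n).continuous.mul (P 0).continuous).aestronglyMeasurable.mul hwm
    simpa [hP0] using integrable_mul_mul_of_integrable_sq hw0 hmeas (hdiag n) (hdiag 0)
  | zero => simp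
  | add p q _ _ hp hq => simp only [eval_add, add_mul]; exact hp.add hq
  | smul c p _ hp => simpa only [eval_smul, smul_eq_mul, mul_assoc] using hp.const_mul c

theorem integrable_mul (hO : IsMonicOrthogonal μ w P h) (p q : ℝ[X]) :
    Integrable (fun x => p.eval x * q.eval x * w x) μ := by
  simpa only [eval_mul] using hO.integrable (p * q)

noncomputable def pairing (hO : IsMonicOrthogonal μ w P h) (r : ℝ[X]) : ℝ[X] →ₗ[ℝ] ℝ where
  toFun q := ∫ x, q.eval x * r.eval x * w x ∂μ
  map_add' p q := by
    simp only [eval_add, add_mul]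
    exact integral_add (hO.integrable_mul p r) (hO.integrable_mul q r)
  map_smul' c p := by
    simp only [eval_smul, smul_eq_mul, mul_assoc, RingHom.id_apply]
    exact integral_const_mul c _

theorem pairing_apply (hO : IsMonicOrthogonal μ w P h) (r q : ℝ[X]) :
    hO.pairing r q = ∫ x, q.eval x * r.eval x * w x ∂μ :=
  rfl

theorem integral_eq_zero_of_degree_lt (hO : IsMonicOrthogonal μ w P h) {n : ℕ} {q : ℝ[X]}
    (hq : q.degree < n) : ∫ x, q.eval x * (P n).eval x * w x ∂μ = 0 := by
  have hsub : P '' Set.Iio n ⊆ LinearMap.ker (hO.pairing (P n)) := by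
    rintro _ ⟨k, hk, rfl⟩
    exact (hO.integral_eq k n).trans (if_neg (Set.mem_Iio.mp hk).ne)
  exact Submodule.span_le.mpr hsub
    (mem_span_image_Iio_of_monic (fun n => ⟨hO.monic n, hO.natDegree_eq n⟩) hq)

theorem degree_divX_lt (hO : IsMonicOrthogonal μ w P h) (m : ℕ) : (P m).divX.degree < m :=
  (Polynomial.degree_divX_lt (hO.monic m).ne_zero).trans_eq <| by
    rw [degree_eq_natDegree (hO.monic m).ne_zero, hO.natDegree_eq]

theorem integral_eq_of_monic (hO : IsMonicOrthogonal μ w P h) {n : ℕ} {q : ℝ[X]}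
    (hq : q.Monic) (hqn : q.natDegree = n) : ∫ x, q.eval x * (P n).eval x * w x ∂μ = h n := by
  have hdeg (p : ℝ[X]) (hp : p.Monic) (hpn : p.natDegree = n) : p.degree = n := by
    rw [degree_eq_natDegree hp.ne_zero, hpn]
  have hlt : (q - P n).degree < n := by
    simpa only [hdeg q hq hqn] using degree_sub_lt_left
      ((hdeg q hq hqn).trans (hdeg _ (hO.monic n) (hO.natDegree_eq n)).symm) hq.ne_zero
      (by rw [hq.leadingCoeff, (hO.monic n).leadingCoeff])
  calc ∫ x, q.eval x * (P n).eval x * w x ∂μ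
      = hO.pairing (P n) (q - P n) + hO.pairing (P n) (P n) := by
        rw [← map_add, sub_add_cancel]
        rfl
    _ = h n := by
      rw [pairing_apply, pairing_apply, hO.integral_eq_zero_of_degree_lt hlt, hO.integral_eq,
        if_pos rfl, zero_add]

theorem mul_norm_pred_eq_norm (hO : IsMonicOrthogonal μ w P h) {n : ℕ} (hn : 1 ≤ n) {α β : ℝ}
    (hrec : ∀ x : ℝ, x * (P n).eval x
      = (P (n + 1)).eval x + α * (P n).eval x + β * (P (n - 1)).eval x) :
    β * h (n - 1) = h n := by
  have hXP : X * P n = P (n + 1) + α • P n + β • P (n - 1) :=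
    Polynomial.funext fun x => by simp [hrec]
  calc β * h (n - 1) = hO.pairing (P (n - 1)) (X * P n) := by
        rw [hXP, map_add, map_add, map_smul, map_smul]
        simp [pairing_apply, hO.integral_eq, show n + 1 ≠ n - 1 by omega, show n ≠ n - 1 by omega]
    _ = ∫ x, (X * P (n - 1)).eval x * (P n).eval x * w x ∂μ := by
        rw [pairing_apply]
        congr 1 with x
        simp only [eval_mul, eval_X]
        ring
    _ = h n := by
      refine hO.integral_eq_of_monic (monic_X.mul (hO.monic _)) ?_
      rw [natDegree_mul X_ne_zero (hO.monic _).ne_zero, natDegree_X, hO.natDegree_eq]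
      omega

theorem integral_inv_mul_split (hO : IsMonicOrthogonal μ w P h)
    (hinv : ∀ p : ℝ[X], Integrable (fun y => y⁻¹ * p.eval y * w y) μ) (h0 : ∀ᵐ y ∂μ, y ≠ 0)
    (p q : ℝ[X]) :
    ∫ y, y⁻¹ * p.eval y * q.eval y * w y ∂μ
      = ∫ y, p.divX.eval y * q.eval y * w y ∂μ + p.eval 0 * ∫ y, y⁻¹ * q.eval y * w y ∂μ := by
  have hsplit : ∀ᵐ y ∂μ, y⁻¹ * p.eval y * q.eval y * w y
      = p.divX.eval y * q.eval y * w y + p.eval 0 * (y⁻¹ * q.eval y * w y) := by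
    filter_upwards [h0] with y hy
    have hp : p.eval y = y * p.divX.eval y + p.eval 0 := by
      conv_lhs => rw [← X_mul_divX_add p]
      simp [coeff_zero_eq_eval_zero]
    rw [hp]
    field_simp
  rw [integral_congr_ae hsplit, integral_add (hO.integrable_mul _ _) ((hinv q).const_mul _),
    integral_const_mul]

variable (t : ℝ)

theorem RStar_eq (hO : IsMonicOrthogonal μ w P h)
    (hinv : ∀ p : ℝ[X], Integrable (fun y => y⁻¹ * p.eval y * w y) μ) (h0 : ∀ᵐ y ∂μ, y ≠ 0)
    (m : ℕ) : RStar μ w P h t m = t / h m * ((P m).eval 0 * ∫ y, y⁻¹ * (P m).eval y * w y ∂μ) := by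
  rw [RStar]
  congr 1
  simp only [sq, ← mul_assoc]
  rw [hO.integral_inv_mul_split hinv h0, hO.integral_eq_zero_of_degree_lt (hO.degree_divX_lt m),
    zero_add]

theorem rStar_eq (hO : IsMonicOrthogonal μ w P h)
    (hinv : ∀ p : ℝ[X], Integrable (fun y => y⁻¹ * p.eval y * w y) μ) (h0 : ∀ᵐ y ∂μ, y ≠ 0)
    {n : ℕ} (hn : 1 ≤ n) :
    rStar μ w P h t n
      = t / h (n - 1) * ((P (n - 1)).eval 0 * ∫ y, y⁻¹ * (P n).eval y * w y ∂μ) := by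
  have hlt : (P (n - 1)).divX.degree < n :=
    (hO.degree_divX_lt (n - 1)).trans (Nat.cast_lt.mpr (by omega))
  have hcomm : (fun y => y⁻¹ * (P n).eval y * (P (n - 1)).eval y * w y)
      = fun y => y⁻¹ * (P (n - 1)).eval y * (P n).eval y * w y := by
    ext y
    ring
  rw [rStar, hcomm, hO.integral_inv_mul_split hinv h0, hO.integral_eq_zero_of_degree_lt hlt,
    zero_add]

theorem rStar_sub_eq (hO : IsMonicOrthogonal μ w P h)
    (hinv : ∀ p : ℝ[X], Integrable (fun y => y⁻¹ * p.eval y * w y) μ) (h0 : ∀ᵐ y ∂μ, y ≠ 0)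
    {n : ℕ} (hn : 1 ≤ n) (hh : h (n - 1) ≠ 0) :
    rStar μ w P h t n - t
      = t / h (n - 1) * ((P n).eval 0 * ∫ y, y⁻¹ * (P (n - 1)).eval y * w y ∂μ) := by
  have hdivX : ∫ y, (P n).divX.eval y * (P (n - 1)).eval y * w y ∂μ = h (n - 1) :=
    hO.integral_eq_of_monic ((hO.monic n).divX (by rw [hO.natDegree_eq]; omega))
      (by rw [natDegree_divX_eq_natDegree_tsub_one, hO.natDegree_eq])
  rw [rStar, hO.integral_inv_mul_split hinv h0, hdivX]
  field_simp
  ring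

theorem rStar_mul_rStar_sub_eq (hO : IsMonicOrthogonal μ w P h) (hh : ∀ n, h n ≠ 0)
    (hinv : ∀ p : ℝ[X], Integrable (fun y => y⁻¹ * p.eval y * w y) μ) (h0 : ∀ᵐ y ∂μ, y ≠ 0)
    {n : ℕ} (hn : 1 ≤ n) {α β : ℝ}
    (hrec : ∀ x : ℝ, x * (P n).eval x
      = (P (n + 1)).eval x + α * (P n).eval x + β * (P (n - 1)).eval x) :
    rStar μ w P h t n * (rStar μ w P h t n - t)
      = β * (RStar μ w P h t n * RStar μ w P h t (n - 1)) := by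
  have hβ : β = h n / h (n - 1) := eq_div_of_mul_eq (hh _) (hO.mul_norm_pred_eq_norm hn hrec)
  rw [hO.rStar_sub_eq t hinv h0 hn (hh _), hO.rStar_eq t hinv h0 hn, hO.RStar_eq t hinv h0,
    hO.RStar_eq t hinv h0, hβ]
  field_simp [hh n, hh (n - 1)]

end IsMonicOrthogonal

end OrthogonalPolynomials

section AiryWeight

open Set

theorem inv_mul_exp_neg_div_le {t y : ℝ} (ht : 0 < t) (hy : 0 < y) :
    y⁻¹ * exp (-(t / y)) ≤ t⁻¹ := by
  rw [exp_neg, ← mul_inv, inv_le_inv₀ (by positivity) ht]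
  calc t = y * (t / y) := by field_simp
    _ ≤ y * exp (t / y) := by gcongr; linarith [add_one_le_exp (t / y)]

theorem integrableOn_Ioi_one_inv_mul {f : ℝ → ℝ} (hf : IntegrableOn f (Ioi 1)) :
    IntegrableOn (fun y => y⁻¹ * f y) (Ioi 1) := by
  refine hf.bdd_mul (c := 1) measurable_inv.aestronglyMeasurable ?_
  filter_upwards [ae_restrict_mem measurableSet_Ioi] with y hy
  rw [norm_inv, Real.norm_of_nonneg (zero_le_one.trans hy.le)]
  exact inv_le_one_of_one_le₀ hy.le

theorem integrableOn_Ioc_inv_mul_airy {lam t : ℝ} (hlam : -1 < lam) (ht : 0 < t) (p : ℝ[X]) :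
    IntegrableOn (fun y => y⁻¹ * p.eval y * (y ^ lam * exp (-y ^ 3 - t / y))) (Ioc 0 1) := by
  obtain ⟨M, hM⟩ := (isCompact_Icc (a := (0 : ℝ)) (b := 1)).exists_bound_of_continuousOn
    p.continuous.continuousOn
  have hpow : IntegrableOn (fun y : ℝ => y ^ lam) (Ioc 0 1) :=
    (intervalIntegral.intervalIntegrable_rpow' hlam).1
  refine (hpow.const_mul (M * t⁻¹)).mono' (by fun_prop : Measurable _).aestronglyMeasurable ?_
  filter_upwards [ae_restrict_mem measurableSet_Ioc] with y ⟨hy0, hy1⟩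
  have hpy : ‖p.eval y‖ ≤ M := hM y ⟨hy0.le, hy1⟩
  have hM0 : 0 ≤ M := (norm_nonneg _).trans hpy
  have hexp : exp (-y ^ 3) ≤ 1 := exp_le_one_iff.mpr (by nlinarith [pow_pos hy0 3])
  have hexp' := inv_mul_exp_neg_div_le ht hy0
  calc ‖y⁻¹ * p.eval y * (y ^ lam * exp (-y ^ 3 - t / y))‖
      = ‖p.eval y‖ * exp (-y ^ 3) * (y⁻¹ * exp (-(t / y))) * y ^ lam := by
        rw [norm_mul, norm_mul, norm_mul, norm_inv, Real.norm_of_nonneg hy0.le,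
          Real.norm_of_nonneg (rpow_nonneg hy0.le lam), Real.norm_of_nonneg (exp_pos _).le,
          sub_eq_add_neg, exp_add]
        ring
    _ ≤ M * 1 * t⁻¹ * y ^ lam := by gcongr
    _ = M * t⁻¹ * y ^ lam := by ring

theorem integrableOn_inv_mul_of_airy {lam t : ℝ} {w : ℝ → ℝ} (hlam : -1 < lam) (ht : 0 < t)
    (hw : ∀ x : ℝ, 0 < x → w x = x ^ lam * exp (-x ^ 3 - t / x)) {p : ℝ[X]}
    (hp : IntegrableOn (fun y => p.eval y * w y) (Ioi 0)) :
    IntegrableOn (fun y => y⁻¹ * p.eval y * w y) (Ioi 0) := by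
  rw [← Ioc_union_Ioi_eq_Ioi zero_le_one]
  refine IntegrableOn.union ?_ ?_
  · exact (integrableOn_Ioc_inv_mul_airy hlam ht p).congr_fun (fun y hy => by rw [hw y hy.1])
      measurableSet_Ioc
  · simpa only [mul_assoc] using
      integrableOn_Ioi_one_inv_mul (hp.mono_set (Ioi_subset_Ioi zero_le_one))

end AiryWeight

theorem stmt_7_general
    (lam t : ℝ) (hlam : -1 < lam) (ht : 0 < t)
    (w : ℝ → ℝ)
    (hw : ∀ x : ℝ, 0 < x → w x = x ^ lam * Real.exp (-x ^ 3 - t / x))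
    (P : ℕ → Polynomial ℝ) (h : ℕ → ℝ) (α β : ℕ → ℝ)
    (hP : ∀ n, (P n).Monic ∧ (P n).natDegree = n)
    (hpos : ∀ n, 0 < h n)
    (horth : ∀ m n, ∫ x in Set.Ioi (0 : ℝ),
        (P m).eval x * (P n).eval x * w x = if m = n then h n else 0)
    (hrec : ∀ n, 1 ≤ n → ∀ x : ℝ, x * (P n).eval x
        = (P (n + 1)).eval x + α n * (P n).eval x + β n * (P (n - 1)).eval x)
    (Rs : ℕ → ℝ)
    (hRs : ∀ m : ℕ, Rs m = (t / h m) * ∫ y in Set.Ioi (0 : ℝ),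
        y⁻¹ * ((P m).eval y) ^ 2 * w y)
    (rs : ℕ → ℝ)
    (hrs : ∀ m : ℕ, 1 ≤ m → rs m = (t / h (m - 1)) * ∫ y in Set.Ioi (0 : ℝ),
        y⁻¹ * (P m).eval y * (P (m - 1)).eval y * w y)
    : ∀ n : ℕ, 1 ≤ n → rs n * (rs n - t) = β n * (Rs n * Rs (n - 1)) := by
  have hpos_mem : ∀ᵐ x ∂(volume.restrict (Set.Ioi (0 : ℝ))), 0 < x :=
    ae_restrict_mem measurableSet_Ioi
  have hw_ae : w =ᵐ[volume.restrict (Set.Ioi 0)] fun x => x ^ lam * exp (-x ^ 3 - t / x) :=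
    hpos_mem.mono hw
  have hw0 : 0 ≤ᵐ[volume.restrict (Set.Ioi 0)] w := by
    filter_upwards [hw_ae, hpos_mem] with x hx hx0
    rw [hx]
    positivity
  have hwm : AEStronglyMeasurable w (volume.restrict (Set.Ioi 0)) :=
    (by fun_prop : Measurable fun x : ℝ => x ^ lam * exp (-x ^ 3 - t / x))
      |>.aestronglyMeasurable.congr hw_ae.symm
  have hh : ∀ n, h n ≠ 0 := fun n => (hpos n).ne'
  have hO : IsMonicOrthogonal (volume.restrict (Set.Ioi 0)) w P h :=
    .of_nonneg hP horth hh hw0 hwm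
  intro n hn
  rw [hrs n hn, hRs n, hRs (n - 1)]
  exact hO.rStar_mul_rStar_sub_eq t hh
    (fun p => integrableOn_inv_mul_of_airy hlam ht hw (hO.integrable p))
    (hpos_mem.mono fun x hx => hx.ne') hn (hrec n hn)

theorem stmt_7
    (lam t : ℝ) (hlam : -1 < lam) (ht : 0 < t)
    (w : ℝ → ℝ)
    (hw : ∀ x : ℝ, 0 < x → w x = x ^ lam * Real.exp (-x ^ 3 - t / x))
    (P : ℕ → Polynomial ℝ) (h : ℕ → ℝ) (α β : ℕ → ℝ)
    (hP : ∀ n, (P n).Monic ∧ (P n).natDegree = n)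
    (hpos : ∀ n, 0 < h n)
    (horth : ∀ m n, ∫ x in Set.Ioi (0 : ℝ),
        (P m).eval x * (P n).eval x * w x = if m = n then h n else 0)
    (hP0 : P 0 = 1)
    (hrec : ∀ n, 1 ≤ n → ∀ x : ℝ, x * (P n).eval x
        = (P (n + 1)).eval x + α n * (P n).eval x + β n * (P (n - 1)).eval x)
    (hrec0 : ∀ x : ℝ, x * (P 0).eval x = (P 1).eval x + α 0 * (P 0).eval x)
    (Rs : ℕ → ℝ)
    (hRs : ∀ m : ℕ, Rs m = (t / h m) * ∫ y in Set.Ioi (0 : ℝ),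
        y⁻¹ * ((P m).eval y) ^ 2 * w y)
    (rs : ℕ → ℝ)
    (hrs : ∀ m : ℕ, 1 ≤ m → rs m = (t / h (m - 1)) * ∫ y in Set.Ioi (0 : ℝ),
        y⁻¹ * (P m).eval y * (P (m - 1)).eval y * w y)
    : ∀ n : ℕ, 1 ≤ n → rs n * (rs n - t) = β n * (Rs n * Rs (n - 1)) :=
  stmt_7_general lam t hlam ht w hw P h α β hP hpos horth hrec Rs hRs rs hrs
end
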